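/- arXiv:1502.04154 — 8 statements merged into one kernel-verified Lean document; each statement's English description precedes it below -/
import Mathlib

section
/- Let L1 = (t_1 ≤ t_2 ≤ ... ≤ t_n) and L2 = (s_1 ≤ s_2 ≤ ... ≤ s_m) be sorted lists of real numbers and let τ_min ≤ τ_max be reals. For every matching (a set of pairs (i,j) with each index used at most once) such that s_j - t_i ∈ [τ_min, τ_max] for every matched pair, there exists a non-crossing matching of the same cardinality, i.e. one that can be written as pairs (i_1,j_1),...,(i_k,j_k) with i_1 < i_2 < ... < i_k and j_1 < j_2 < ... < j_k. (In other words, imposing the causality/non-crossing constraint does not decrease the maximum matching size.) -/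
/-!
Pair the `i`-th smallest left index used by `M` with the `i`-th smallest right index used by `M`.
This matching is non-crossing and has the size of `M`. It stays valid because each of its pairs
`(a, b)` is sandwiched by pairs of `M`: exactly `i` pairs of `M` have right end `< b`, while
`i + 1` of them have left end `≤ a`, so some `(a', b') ∈ M` has `a' ≤ a` and `b ≤ b'`;
symmetrically some `(a'', b'') ∈ M` has `a ≤ a''` and `b'' ≤ b`. Monotonicity of `t` and `s` then
squeezes `s b - t a` between `s b'' - t a''` and `s b' - t a'`.
-/

open Finset

namespace Finset

lemma card_filter_comp_of_injOn {ι α : Type*} [DecidableEq α] {s : Finset ι} {f : ι → α}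
    (hf : Set.InjOn f s) (P : α → Prop) [DecidablePred P] :
    #{x ∈ s | P (f x)} = #{y ∈ s.image f | P y} := by
  rw [filter_image, card_image_of_injOn (hf.mono (filter_subset _ s))]

lemma exists_mem_and_not_of_card_filter_lt {ι : Type*} {s : Finset ι} {P Q : ι → Prop}
    [DecidablePred P] [DecidablePred Q] (h : #{x ∈ s | Q x} < #{x ∈ s | P x}) :
    ∃ x ∈ s, P x ∧ ¬Q x := by
  obtain ⟨x, hx, hx'⟩ := exists_mem_notMem_of_card_lt_card h
  rw [mem_filter] at hx hx'
  exact ⟨x, hx.1, hx.2, fun hQ => hx' ⟨hx.1, hQ⟩⟩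

section OrderEmbOfFin

variable {α : Type*} [LinearOrder α] (s : Finset α) {k : ℕ} (h : #s = k) (i : Fin k)

lemma card_filter_eq_card_filter_orderEmbOfFin (P : α → Prop) [DecidablePred P] :
    #{x ∈ s | P x} = #{j : Fin k | P (s.orderEmbOfFin h j)} := by
  conv_lhs => rw [← s.map_orderEmbOfFin_univ h]
  rw [filter_map, card_map]
  rfl

lemma card_filter_lt_orderEmbOfFin : #{x ∈ s | x < s.orderEmbOfFin h i} = i := by
  simp only [card_filter_eq_card_filter_orderEmbOfFin s h, OrderEmbedding.lt_iff_lt,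
    filter_gt_eq_Iio, Fin.card_Iio]

lemma card_filter_le_orderEmbOfFin : #{x ∈ s | x ≤ s.orderEmbOfFin h i} = i + 1 := by
  simp only [card_filter_eq_card_filter_orderEmbOfFin s h, OrderEmbedding.le_iff_le,
    filter_ge_eq_Iic, Fin.card_Iic]

lemma card_filter_orderEmbOfFin_lt : #{x ∈ s | s.orderEmbOfFin h i < x} = k - 1 - i := by
  simp only [card_filter_eq_card_filter_orderEmbOfFin s h, OrderEmbedding.lt_iff_lt,
    filter_lt_eq_Ioi, Fin.card_Ioi]

lemma card_filter_orderEmbOfFin_le : #{x ∈ s | s.orderEmbOfFin h i ≤ x} = k - i := by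
  simp only [card_filter_eq_card_filter_orderEmbOfFin s h, OrderEmbedding.le_iff_le,
    filter_le_eq_Ici, Fin.card_Ici]

end OrderEmbOfFin

end Finset

section SortedMatching

variable {α β : Type*} [LinearOrder α] [LinearOrder β] {M : Finset (α × β)}
  (hfst : Set.InjOn Prod.fst (M : Set (α × β))) (hsnd : Set.InjOn Prod.snd (M : Set (α × β)))

noncomputable def sortedFst : Fin #M ↪o α :=
  (M.image Prod.fst).orderEmbOfFin (card_image_of_injOn hfst)

noncomputable def sortedSnd : Fin #M ↪o β :=
  (M.image Prod.snd).orderEmbOfFin (card_image_of_injOn hsnd)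

noncomputable def sortedMatching : Finset (α × β) :=
  univ.image fun i => (sortedFst hfst i, sortedSnd hsnd i)

lemma eq_of_mem_sortedMatching {p q : α × β} (hp : p ∈ sortedMatching hfst hsnd)
    (hq : q ∈ sortedMatching hfst hsnd) (hpq : p.1 = q.1 ∨ p.2 = q.2) : p = q := by
  obtain ⟨i, -, rfl⟩ := mem_image.mp hp
  obtain ⟨j, -, rfl⟩ := mem_image.mp hq
  obtain hij | hij := hpq
  · rw [(sortedFst hfst).injective hij]
  · rw [(sortedSnd hsnd).injective hij]

lemma snd_lt_snd_of_mem_sortedMatching {p q : α × β} (hp : p ∈ sortedMatching hfst hsnd)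
    (hq : q ∈ sortedMatching hfst hsnd) (hpq : p.1 < q.1) : p.2 < q.2 := by
  obtain ⟨i, -, rfl⟩ := mem_image.mp hp
  obtain ⟨j, -, rfl⟩ := mem_image.mp hq
  exact (sortedSnd hsnd).lt_iff_lt.mpr ((sortedFst hfst).lt_iff_lt.mp hpq)

lemma card_sortedMatching : #(sortedMatching hfst hsnd) = #M := by
  rw [sortedMatching, card_image_of_injective _ fun i j hij => (sortedFst hfst).injective
    (congrArg Prod.fst hij), card_univ, Fintype.card_fin]

lemma exists_mem_fst_le_and_le_snd_of_mem_sortedMatching {p : α × β}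
    (hp : p ∈ sortedMatching hfst hsnd) : ∃ q ∈ M, q.1 ≤ p.1 ∧ p.2 ≤ q.2 := by
  obtain ⟨i, -, rfl⟩ := mem_image.mp hp
  have hcard : #{q ∈ M | q.2 < sortedSnd hsnd i} < #{q ∈ M | q.1 ≤ sortedFst hfst i} := by
    rw [card_filter_comp_of_injOn hsnd (· < sortedSnd hsnd i),
      card_filter_comp_of_injOn hfst (· ≤ sortedFst hfst i), sortedFst, sortedSnd,
      card_filter_lt_orderEmbOfFin, card_filter_le_orderEmbOfFin]
    omega
  obtain ⟨q, hq, hP, hQ⟩ := exists_mem_and_not_of_card_filter_lt hcard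
  exact ⟨q, hq, hP, not_lt.mp hQ⟩

lemma exists_mem_le_fst_and_snd_le_of_mem_sortedMatching {p : α × β}
    (hp : p ∈ sortedMatching hfst hsnd) : ∃ q ∈ M, p.1 ≤ q.1 ∧ q.2 ≤ p.2 := by
  obtain ⟨i, -, rfl⟩ := mem_image.mp hp
  have hcard : #{q ∈ M | sortedSnd hsnd i < q.2} < #{q ∈ M | sortedFst hfst i ≤ q.1} := by
    rw [card_filter_comp_of_injOn hsnd (sortedSnd hsnd i < ·),
      card_filter_comp_of_injOn hfst (sortedFst hfst i ≤ ·), sortedFst, sortedSnd,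
      card_filter_orderEmbOfFin_lt, card_filter_orderEmbOfFin_le]
    omega
  obtain ⟨q, hq, hP, hQ⟩ := exists_mem_and_not_of_card_filter_lt hcard
  exact ⟨q, hq, hP, not_lt.mp hQ⟩

end SortedMatching

theorem noncrossing_matching_same_card_general {n m : ℕ} (t : Fin n → ℝ) (s : Fin m → ℝ)
    (ht : Monotone t) (hs : Monotone s) (τmin τmax : ℝ)
    (M : Finset (Fin n × Fin m))
    (hinj : ∀ p ∈ M, ∀ q ∈ M, (p.1 = q.1 ∨ p.2 = q.2) → p = q)
    (hvalid : ∀ p ∈ M, τmin ≤ s p.2 - t p.1 ∧ s p.2 - t p.1 ≤ τmax) :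
    ∃ M' : Finset (Fin n × Fin m),
      (∀ p ∈ M', ∀ q ∈ M', (p.1 = q.1 ∨ p.2 = q.2) → p = q) ∧
      (∀ p ∈ M', τmin ≤ s p.2 - t p.1 ∧ s p.2 - t p.1 ≤ τmax) ∧
      (∀ p ∈ M', ∀ q ∈ M', p.1 < q.1 → p.2 < q.2) ∧
      M'.card = M.card := by
  have hfst : Set.InjOn Prod.fst M := fun p hp q hq h => hinj p hp q hq (Or.inl h)
  have hsnd : Set.InjOn Prod.snd M := fun p hp q hq h => hinj p hp q hq (Or.inr h)
  refine ⟨sortedMatching hfst hsnd, fun p hp q hq => eq_of_mem_sortedMatching hfst hsnd hp hq,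
    fun p hp => ?_, fun p hp q hq => snd_lt_snd_of_mem_sortedMatching hfst hsnd hp hq,
    card_sortedMatching hfst hsnd⟩
  obtain ⟨q, hqM, hq₁, hq₂⟩ := exists_mem_le_fst_and_snd_le_of_mem_sortedMatching hfst hsnd hp
  obtain ⟨r, hrM, hr₁, hr₂⟩ := exists_mem_fst_le_and_le_snd_of_mem_sortedMatching hfst hsnd hp
  constructor
  · linarith [(hvalid q hqM).1, ht hq₁, hs hq₂]
  · linarith [(hvalid r hrM).2, ht hr₁, hs hr₂]

/-- For sorted lists and any valid matching, there is a non-crossing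
valid matching of the same cardinality. -/
theorem noncrossing_matching_same_card {n m : ℕ} (t : Fin n → ℝ) (s : Fin m → ℝ)
    (ht : Monotone t) (hs : Monotone s) (τmin τmax : ℝ) (hτ : τmin ≤ τmax)
    (M : Finset (Fin n × Fin m))
    (hinj : ∀ p ∈ M, ∀ q ∈ M, (p.1 = q.1 ∨ p.2 = q.2) → p = q)
    (hvalid : ∀ p ∈ M, τmin ≤ s p.2 - t p.1 ∧ s p.2 - t p.1 ≤ τmax) :
    ∃ M' : Finset (Fin n × Fin m),
      (∀ p ∈ M', ∀ q ∈ M', (p.1 = q.1 ∨ p.2 = q.2) → p = q) ∧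
      (∀ p ∈ M', τmin ≤ s p.2 - t p.1 ∧ s p.2 - t p.1 ≤ τmax) ∧
      (∀ p ∈ M', ∀ q ∈ M', p.1 < q.1 → p.2 < q.2) ∧
      M'.card = M.card :=
  noncrossing_matching_same_card_general t s ht hs τmin τmax M hinj hvalid
end

section
/- Let L1, L2 be sorted lists of reals and τ_min ≤ τ_max. Define the greedy matching recursively: find the lexicographically earliest valid pair (i*, j*) (i.e., scan forward advancing whichever pointer violates the constraint, as in Algorithm-Chain), match it, and recurse on the suffixes L1[i*+1..], L2[j*+1..]. Then the greedy matching has maximum cardinality among all valid matchings. -/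
/-!
When `s - t < τmin`, sortedness of the first list forbids every pair in the column of `s`; when
`τmax < s - t`, sortedness of the second list forbids every pair in the row of `t`. In both cases
dropping that entry loses nothing. When `(t, s)` is valid, a matching using both `(t, s_j)` and
`(t_i, s)` can trade them for `(t_i, s_j)`, which is valid again by sortedness; so deleting the
row of `t` and the column of `s` costs any matching at most one pair, exactly as it costs the
greedy matching its pair `(t, s)`.
-/

/-- The greedy matching size: repeatedly find the earliest valid pair by pointer
advancing (as in Algorithm-Chain) and recurse on the remaining suffixes. -/
noncomputable def greedyCount (τmin τmax : ℝ) : List ℝ → List ℝ → ℕ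
  | [], _ => 0
  | _ :: _, [] => 0
  | t :: ts, s :: ss =>
      if s - t < τmin then greedyCount τmin τmax (t :: ts) ss
      else if τmax < s - t then greedyCount τmin τmax ts (s :: ss)
      else 1 + greedyCount τmin τmax ts ss
  termination_by l1 l2 => l1.length + l2.length
  decreasing_by all_goals simp +arith +decide

open Finset

structure IsMatching (R : ℕ → ℕ → Prop) (M : Finset (ℕ × ℕ)) : Prop where
  rel : ∀ p ∈ M, R p.1 p.2
  fst_injOn : Set.InjOn Prod.fst (M : Set (ℕ × ℕ))
  snd_injOn : Set.InjOn Prod.snd (M : Set (ℕ × ℕ))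

def shiftPair (a b : ℕ) : ℕ × ℕ ↪ ℕ × ℕ :=
  (addRightEmbedding a).prodMap (addRightEmbedding b)

@[simp]
lemma shiftPair_apply (a b : ℕ) (p : ℕ × ℕ) : shiftPair a b p = (p.1 + a, p.2 + b) := rfl

namespace IsMatching

variable {R : ℕ → ℕ → Prop} {M N : Finset (ℕ × ℕ)} {a b : ℕ}

lemma map_shiftPair_iff :
    IsMatching R (N.map (shiftPair a b)) ↔ IsMatching (fun i j ↦ R (i + a) (j + b)) N := by
  constructor
  · rintro ⟨hrel, hfst, hsnd⟩
    have hmem {p} (hp : p ∈ N) : shiftPair a b p ∈ N.map (shiftPair a b) := mem_map_of_mem _ hp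
    exact ⟨fun p hp ↦ hrel _ (hmem hp),
      fun p hp q hq h ↦ (shiftPair a b).injective (hfst (hmem hp) (hmem hq) (by simp [h])),
      fun p hp q hq h ↦ (shiftPair a b).injective (hsnd (hmem hp) (hmem hq) (by simp [h]))⟩
  · rintro ⟨hrel, hfst, hsnd⟩
    refine ⟨?_, ?_, ?_⟩
    · intro _ hp
      obtain ⟨p, hpN, rfl⟩ := mem_map.1 hp
      exact hrel p hpN
    · rintro _ hp _ hq h
      obtain ⟨p, hpN, rfl⟩ := mem_map.1 hp
      obtain ⟨q, hqN, rfl⟩ := mem_map.1 hq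
      rw [hfst hpN hqN (by simpa using h)]
    · rintro _ hp _ hq h
      obtain ⟨p, hpN, rfl⟩ := mem_map.1 hp
      obtain ⟨q, hqN, rfl⟩ := mem_map.1 hq
      rw [hsnd hpN hqN (by simpa using h)]

lemma exists_shiftPair (hM : IsMatching R M) (h : ∀ p ∈ M, a ≤ p.1 ∧ b ≤ p.2) :
    ∃ N, IsMatching (fun i j ↦ R (i + a) (j + b)) N ∧ N.card = M.card := by
  set f := shiftPair a b
  have hmap : (M.preimage f f.injective.injOn).map f = M := by
    ext p
    simp only [mem_map, mem_preimage]
    refine ⟨fun ⟨q, hq, hqp⟩ ↦ hqp ▸ hq, fun hp ↦ ⟨(p.1 - a, p.2 - b), ?_, ?_⟩⟩ <;>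
      have := h p hp <;>
      simp only [f, shiftPair_apply, Nat.sub_add_cancel this.1, Nat.sub_add_cancel this.2]
    exact hp
  refine ⟨_, map_shiftPair_iff.1 (hmap ▸ hM), ?_⟩
  conv_rhs => rw [← hmap]
  exact (card_map _).symm

lemma insert {c : ℕ × ℕ} (hM : IsMatching R M) (hc : R c.1 c.2)
    (h1 : ∀ p ∈ M, p.1 ≠ c.1) (h2 : ∀ p ∈ M, p.2 ≠ c.2) : IsMatching R (insert c M) := by
  have hcM : c ∉ M := fun hc ↦ h1 c hc rfl
  refine ⟨?_, ?_, ?_⟩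
  · simpa [hc] using hM.rel
  · rw [coe_insert, Set.injOn_insert (by simpa using hcM)]
    exact ⟨hM.fst_injOn, by simpa using fun x hx ↦ h1 (c.1, x) hx rfl⟩
  · rw [coe_insert, Set.injOn_insert (by simpa using hcM)]
    exact ⟨hM.snd_injOn, by simpa using fun x hx ↦ h2 (x, c.2) hx rfl⟩

lemma mono (hM : IsMatching R M) (h : N ⊆ M) : IsMatching R N :=
  ⟨fun p hp ↦ hM.rel p (h hp), hM.fst_injOn.mono (coe_subset.2 h),
    hM.snd_injOn.mono (coe_subset.2 h)⟩

lemma exists_card_le_succ_off_axes (hR : ∀ i j, R 0 j → R i 0 → R i j) (hM : IsMatching R M) :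
    ∃ N, IsMatching R N ∧ (∀ p ∈ N, 1 ≤ p.1 ∧ 1 ≤ p.2) ∧ M.card ≤ N.card + 1 := by
  classical
  set B := M.filter fun p ↦ p.1 = 0 ∨ p.2 = 0
  set I := M.filter fun p ↦ ¬(p.1 = 0 ∨ p.2 = 0)
  have hsplit : B.card + I.card = M.card := card_filter_add_card_filter_not _
  have hI : ∀ p ∈ I, 1 ≤ p.1 ∧ 1 ≤ p.2 := fun p hp ↦ by have := (mem_filter.1 hp).2; omega
  -- Pairs `(0, j)` and `(i, 0)` are traded for `(i, j)`; otherwise at most one pair is on an axis.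
  by_cases hex : ∃ i j, (0, j) ∈ M ∧ (i, 0) ∈ M ∧ j ≠ 0
  · obtain ⟨i, j, hj, hi, hj0⟩ := hex
    have hi0 : i ≠ 0 := by rintro rfl; exact hj0 (congrArg Prod.snd (hM.fst_injOn hj hi rfl))
    have hB : B ⊆ {(0, j), (i, 0)} := by
      intro p hp
      obtain ⟨hpM, hp0 | hp0⟩ := mem_filter.1 hp
      · simp [hM.fst_injOn hpM hj hp0]
      · simp [hM.snd_injOn hpM hi hp0]
    have hrow : ∀ p ∈ I, p.1 ≠ i := fun p hp h ↦ by
      have := hM.fst_injOn (mem_filter.1 hp).1 hi h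
      have := hI p hp
      simp_all
    have hcol : ∀ p ∈ I, p.2 ≠ j := fun p hp h ↦ by
      have := hM.snd_injOn (mem_filter.1 hp).1 hj h
      have := hI p hp
      simp_all
    refine ⟨Insert.insert (i, j) I, (hM.mono (filter_subset _ _)).insert (hR i j (hM.rel _ hj)
      (hM.rel _ hi)) hrow hcol, ?_, ?_⟩
    · exact forall_mem_insert _ _ _ |>.2 ⟨⟨by omega, by omega⟩, hI⟩
    · rw [card_insert_of_notMem fun h ↦ hrow _ h rfl]
      have := (card_le_card hB).trans card_le_two
      omega
  · refine ⟨I, hM.mono (filter_subset _ _), hI, ?_⟩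
    push Not at hex
    have hB : (∀ p ∈ B, p.1 = 0) ∨ ∀ p ∈ B, p.2 = 0 := by
      by_cases hcol : ∃ i, (i, 0) ∈ M
      · obtain ⟨i, hi⟩ := hcol
        refine .inr fun p hp ↦ ?_
        obtain ⟨hpM, hp0 | hp0⟩ := mem_filter.1 hp
        · exact hex i p.2 (by simpa [← hp0] using hpM) hi
        · exact hp0
      · refine .inl fun p hp ↦ ?_
        obtain ⟨hpM, hp0 | hp0⟩ := mem_filter.1 hp
        · exact hp0
        · exact absurd ⟨p.1, by simpa [← hp0] using hpM⟩ hcol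
    have : B.card ≤ 1 := by
      rw [card_le_one]
      intro p hp q hq
      rcases hB with hB | hB
      · exact hM.fst_injOn (mem_filter.1 hp).1 (mem_filter.1 hq).1
          ((hB p hp).trans (hB q hq).symm)
      · exact hM.snd_injOn (mem_filter.1 hp).1 (mem_filter.1 hq).1
          ((hB p hp).trans (hB q hq).symm)
    omega

end IsMatching

lemma List.Pairwise.getD_zero_le_getD {α : Type*} [Preorder α] {l : List α} {d : α}
    (h : l.Pairwise (· ≤ ·)) {i : ℕ} (hi : i < l.length) : l.getD 0 d ≤ l.getD i d := by
  cases l with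
  | nil => simp at hi
  | cons a l =>
    cases i with
    | zero => rfl
    | succ i =>
      rw [List.getD_cons_zero, List.getD_cons_succ, List.getD_eq_getElem _ _ (by simpa using hi)]
      exact List.rel_of_pairwise_cons h (List.getElem_mem _)

def ValidPair (τmin τmax : ℝ) (l1 l2 : List ℝ) (i j : ℕ) : Prop :=
  i < l1.length ∧ j < l2.length ∧
    τmin ≤ l2.getD j 0 - l1.getD i 0 ∧ l2.getD j 0 - l1.getD i 0 ≤ τmax

section ValidPair

variable {τmin τmax t s : ℝ} {l1 l2 ts ss : List ℝ} {i j : ℕ}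

@[simp]
lemma validPair_cons_left :
    ValidPair τmin τmax (t :: ts) l2 (i + 1) j ↔ ValidPair τmin τmax ts l2 i j := by
  simp [ValidPair]

@[simp]
lemma validPair_cons_right :
    ValidPair τmin τmax l1 (s :: ss) i (j + 1) ↔ ValidPair τmin τmax l1 ss i j := by
  simp [ValidPair]

lemma validPair_cons_cons_zero_zero :
    ValidPair τmin τmax (t :: ts) (s :: ss) 0 0 ↔ τmin ≤ s - t ∧ s - t ≤ τmax := by
  simp [ValidPair]

lemma not_validPair_zero_right (h1 : l1.Pairwise (· ≤ ·))
    (h : l2.getD 0 0 - l1.getD 0 0 < τmin) :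
    ¬ValidPair τmin τmax l1 l2 i 0 := fun ⟨hi, _, hmin, _⟩ ↦ by
  linarith [h1.getD_zero_le_getD (d := 0) hi]

lemma not_validPair_zero_left (h2 : l2.Pairwise (· ≤ ·))
    (h : τmax < l2.getD 0 0 - l1.getD 0 0) :
    ¬ValidPair τmin τmax l1 l2 0 j := fun ⟨_, hj, _, hmax⟩ ↦ by
  linarith [h2.getD_zero_le_getD (d := 0) hj]

lemma ValidPair.of_zero_left_of_zero_right (h1 : l1.Pairwise (· ≤ ·)) (h2 : l2.Pairwise (· ≤ ·))
    (h0j : ValidPair τmin τmax l1 l2 0 j) (hi0 : ValidPair τmin τmax l1 l2 i 0) :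
    ValidPair τmin τmax l1 l2 i j := by
  obtain ⟨-, hj, -, hmax⟩ := h0j
  obtain ⟨hi, -, hmin, -⟩ := hi0
  exact ⟨hi, hj, by linarith [h2.getD_zero_le_getD (d := 0) hj],
    by linarith [h1.getD_zero_le_getD (d := 0) hi]⟩

end ValidPair

lemma exists_isMatching_card_eq_greedyCount (τmin τmax : ℝ) (l1 l2 : List ℝ) :
    ∃ M, IsMatching (ValidPair τmin τmax l1 l2) M ∧ M.card = greedyCount τmin τmax l1 l2 := by
  induction l1, l2 using greedyCount.induct τmin τmax with
  | case1 l2 => exact ⟨∅, ⟨by simp, by simp, by simp⟩, by simp [greedyCount]⟩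
  | case2 t ts => exact ⟨∅, ⟨by simp, by simp, by simp⟩, by simp [greedyCount]⟩
  | case3 t ts s ss h ih =>
    obtain ⟨N, hN, hcard⟩ := ih
    refine ⟨N.map (shiftPair 0 1), IsMatching.map_shiftPair_iff.2 (by simpa using hN), ?_⟩
    rw [card_map, hcard, greedyCount, if_pos h]
  | case4 t ts s ss hmin hmax ih =>
    obtain ⟨N, hN, hcard⟩ := ih
    refine ⟨N.map (shiftPair 1 0), IsMatching.map_shiftPair_iff.2 (by simpa using hN), ?_⟩
    rw [card_map, hcard, greedyCount, if_neg hmin, if_pos hmax]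
  | case5 t ts s ss hmin hmax ih =>
    obtain ⟨N, hN, hcard⟩ := ih
    have hN' : IsMatching (ValidPair τmin τmax (t :: ts) (s :: ss)) (N.map (shiftPair 1 1)) :=
      IsMatching.map_shiftPair_iff.2 (by simpa using hN)
    have hoff : ∀ p ∈ N.map (shiftPair 1 1), p.1 ≠ 0 ∧ p.2 ≠ 0 := by
      rintro _ hp
      obtain ⟨q, -, rfl⟩ := mem_map.1 hp
      simp
    refine ⟨insert (0, 0) (N.map (shiftPair 1 1)), hN'.insert
      (validPair_cons_cons_zero_zero.2 ⟨not_lt.1 hmin, not_lt.1 hmax⟩)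
      (fun p hp ↦ (hoff p hp).1) (fun p hp ↦ (hoff p hp).2), ?_⟩
    rw [card_insert_of_notMem fun h ↦ (hoff _ h).1 rfl, card_map, hcard, greedyCount,
      if_neg hmin, if_neg hmax, add_comm]

lemma IsMatching.card_le_greedyCount {τmin τmax : ℝ} {l1 l2 : List ℝ} {M : Finset (ℕ × ℕ)}
    (h1 : l1.Pairwise (· ≤ ·)) (h2 : l2.Pairwise (· ≤ ·))
    (hM : IsMatching (ValidPair τmin τmax l1 l2) M) : M.card ≤ greedyCount τmin τmax l1 l2 := by
  induction l1, l2 using greedyCount.induct τmin τmax generalizing M with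
  | case1 l2 =>
    simp [eq_empty_of_forall_notMem fun p hp ↦ Nat.not_lt_zero _ (hM.rel p hp).1]
  | case2 t ts =>
    simp [eq_empty_of_forall_notMem fun p hp ↦ Nat.not_lt_zero _ (hM.rel p hp).2.1]
  | case3 t ts s ss h ih =>
    have hcol : ∀ p ∈ M, 0 ≤ p.1 ∧ 1 ≤ p.2 := fun p hp ↦ ⟨p.1.zero_le, Nat.one_le_iff_ne_zero.2
      fun h0 ↦ not_validPair_zero_right h1 (by simpa using h) (h0 ▸ hM.rel p hp)⟩
    obtain ⟨N, hN, hcard⟩ := hM.exists_shiftPair hcol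
    rw [greedyCount, if_pos h, ← hcard]
    exact ih h1 h2.of_cons (by simpa using hN)
  | case4 t ts s ss hmin hmax ih =>
    have hrow : ∀ p ∈ M, 1 ≤ p.1 ∧ 0 ≤ p.2 := fun p hp ↦ ⟨Nat.one_le_iff_ne_zero.2
      fun h0 ↦ not_validPair_zero_left h2 (by simpa using hmax) (h0 ▸ hM.rel p hp), p.2.zero_le⟩
    obtain ⟨N, hN, hcard⟩ := hM.exists_shiftPair hrow
    rw [greedyCount, if_neg hmin, if_pos hmax, ← hcard]
    exact ih h1.of_cons h2 (by simpa using hN)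
  | case5 t ts s ss hmin hmax ih =>
    obtain ⟨N, hN, hoff, hle⟩ := hM.exists_card_le_succ_off_axes
      fun _ _ ↦ ValidPair.of_zero_left_of_zero_right h1 h2
    obtain ⟨N', hN', hcard⟩ := hN.exists_shiftPair hoff
    have := ih h1.of_cons h2.of_cons (by simpa using hN')
    rw [greedyCount, if_neg hmin, if_neg hmax]
    omega

open Classical in
theorem greedy_is_maximum_general (τmin τmax : ℝ) (l1 l2 : List ℝ)
    (h1 : l1.Pairwise (· ≤ ·)) (h2 : l2.Pairwise (· ≤ ·)) :
    (∃ M : Finset (ℕ × ℕ),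
      (∀ p ∈ M, p.1 < l1.length ∧ p.2 < l2.length ∧
        τmin ≤ l2.getD p.2 0 - l1.getD p.1 0 ∧ l2.getD p.2 0 - l1.getD p.1 0 ≤ τmax) ∧
      (∀ p ∈ M, ∀ q ∈ M, (p.1 = q.1 ∨ p.2 = q.2) → p = q) ∧
      M.card = greedyCount τmin τmax l1 l2) ∧
    (∀ M : Finset (ℕ × ℕ),
      (∀ p ∈ M, p.1 < l1.length ∧ p.2 < l2.length ∧
        τmin ≤ l2.getD p.2 0 - l1.getD p.1 0 ∧ l2.getD p.2 0 - l1.getD p.1 0 ≤ τmax) →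
      (∀ p ∈ M, ∀ q ∈ M, (p.1 = q.1 ∨ p.2 = q.2) → p = q) →
      M.card ≤ greedyCount τmin τmax l1 l2) := by
  obtain ⟨M, hM, hcard⟩ := exists_isMatching_card_eq_greedyCount τmin τmax l1 l2
  refine ⟨⟨M, hM.rel, fun p hp q hq h ↦ ?_, hcard⟩, fun M hrel hinj ↦ ?_⟩
  · rcases h with h | h
    exacts [hM.fst_injOn hp hq h, hM.snd_injOn hp hq h]
  · exact IsMatching.card_le_greedyCount h1 h2
      ⟨hrel, fun p hp q hq h ↦ hinj p hp q hq (.inl h), fun p hp q hq h ↦ hinj p hp q hq (.inr h)⟩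

open Classical in
/-- for sorted lists, the greedy matching has maximum cardinality
among all valid matchings: its size is achieved by a valid matching, and no
valid matching is larger. -/
theorem greedy_is_maximum (τmin τmax : ℝ) (hτ : τmin ≤ τmax) (l1 l2 : List ℝ)
    (h1 : l1.Pairwise (· ≤ ·)) (h2 : l2.Pairwise (· ≤ ·)) :
    (∃ M : Finset (ℕ × ℕ),
      (∀ p ∈ M, p.1 < l1.length ∧ p.2 < l2.length ∧
        τmin ≤ l2.getD p.2 0 - l1.getD p.1 0 ∧ l2.getD p.2 0 - l1.getD p.1 0 ≤ τmax) ∧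
      (∀ p ∈ M, ∀ q ∈ M, (p.1 = q.1 ∨ p.2 = q.2) → p = q) ∧
      M.card = greedyCount τmin τmax l1 l2) ∧
    (∀ M : Finset (ℕ × ℕ),
      (∀ p ∈ M, p.1 < l1.length ∧ p.2 < l2.length ∧
        τmin ≤ l2.getD p.2 0 - l1.getD p.1 0 ∧ l2.getD p.2 0 - l1.getD p.1 0 ≤ τmax) →
      (∀ p ∈ M, ∀ q ∈ M, (p.1 = q.1 ∨ p.2 = q.2) → p = q) →
      M.card ≤ greedyCount τmin τmax l1 l2) :=
  greedy_is_maximum_general τmin τmax l1 l2 h1 h2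
end

section
/- Let L1, L2 be sorted lists of reals and τ_min ≤ τ_max. If (t_{i_1}, s_{j_1}) is the earliest valid pair (found by the greedy pointer-advancing procedure) and (t_{i'}, s_{j'}) is any valid pair, then i_1 ≤ i' and j_1 ≤ j'. -/
/-!
The valid pairs form a meet-closed subset of the finite lattice `Fin n × Fin m`: given valid
pairs `(i, j)` and `(i', j')`, lowering `t`'s index only widens the gap and lowering `s`'s index
only narrows it, so the lower bound on the gap at `(i ⊓ i', j ⊓ j')` is inherited from whichever
pair attains `j ⊓ j'`, and the upper bound from whichever attains `i ⊓ i'`. A finite nonempty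
meet-closed set contains the meet of all its elements, which is the earliest valid pair.
-/

theorem Set.Finite.exists_isLeast_of_infClosed {α : Type*} [SemilatticeInf α] {s : Set α}
    (hfin : s.Finite) (hinf : InfClosed s) (hne : s.Nonempty) : ∃ a, IsLeast s a := by
  have hne' : hfin.toFinset.Nonempty := hfin.toFinset_nonempty.mpr hne
  refine ⟨hfin.toFinset.inf' hne' id, ?_, fun b hb => ?_⟩
  · exact hinf.finsetInf'_mem hne' fun a ha => hfin.mem_toFinset.mp ha
  · exact Finset.inf'_le id (hfin.mem_toFinset.mpr hb)

theorem infClosed_setOf_sub_mem_Icc {α β G : Type*} [LinearOrder α] [LinearOrder β]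
    [AddCommGroup G] [LinearOrder G] [IsOrderedAddMonoid G] {t : α → G} {s : β → G}
    (ht : Monotone t) (hs : Monotone s) (a b : G) :
    InfClosed {p : α × β | s p.2 - t p.1 ∈ Set.Icc a b} := by
  rintro ⟨i, j⟩ ⟨hl, hu⟩ ⟨i', j'⟩ ⟨hl', hu'⟩
  refine ⟨?_, ?_⟩
  · rcases min_choice j j' with h | h <;> simp only [Prod.mk_inf_mk, h]
    · exact hl.trans (sub_le_sub_left (ht (min_le_left i i')) _)
    · exact hl'.trans (sub_le_sub_left (ht (min_le_right i i')) _)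
  · rcases min_choice i i' with h | h <;> simp only [Prod.mk_inf_mk, h]
    · exact (sub_le_sub_right (hs (min_le_left j j')) _).trans hu
    · exact (sub_le_sub_right (hs (min_le_right j j')) _).trans hu'

theorem earliest_valid_pair_general {n m : ℕ} (t : Fin n → ℝ) (s : Fin m → ℝ)
    (ht : Monotone t) (hs : Monotone s) (τmin τmax : ℝ)
    (hex : ∃ i j, τmin ≤ s j - t i ∧ s j - t i ≤ τmax) :
    ∃ i₁ j₁, (τmin ≤ s j₁ - t i₁ ∧ s j₁ - t i₁ ≤ τmax) ∧
      ∀ i' j', (τmin ≤ s j' - t i' ∧ s j' - t i' ≤ τmax) → i₁ ≤ i' ∧ j₁ ≤ j' := by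
  obtain ⟨i, j, hij⟩ := hex
  obtain ⟨⟨i₁, j₁⟩, hvalid, hleast⟩ := (Set.toFinite _).exists_isLeast_of_infClosed
    (infClosed_setOf_sub_mem_Icc ht hs τmin τmax) ⟨(i, j), hij⟩
  exact ⟨i₁, j₁, hvalid, fun i' j' h' => Prod.mk_le_mk.mp (hleast h')⟩

/-- for sorted lists, if any valid pair exists then there exists a
componentwise-minimal (earliest) valid pair: one dominated by every valid pair. -/
theorem earliest_valid_pair {n m : ℕ} (t : Fin n → ℝ) (s : Fin m → ℝ)
    (ht : Monotone t) (hs : Monotone s) (τmin τmax : ℝ) (hτ : τmin ≤ τmax)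
    (hex : ∃ i j, τmin ≤ s j - t i ∧ s j - t i ≤ τmax) :
    ∃ i₁ j₁, (τmin ≤ s j₁ - t i₁ ∧ s j₁ - t i₁ ≤ τmax) ∧
      ∀ i' j', (τmin ≤ s j' - t i' ∧ s j' - t i' ≤ τmax) → i₁ ≤ i' ∧ j₁ ≤ j' :=
  earliest_valid_pair_general t s ht hs τmin τmax hex
end

section
/- Let f : ℝ → ℝ be strictly monotonically decreasing with f(s_m - t_1) > 0, and let L1 = (t_1 < ... < t_n), L2 = (s_1 < ... < s_m) be sorted lists of reals with s_j > t_n for all j. Then in every maximum-weight non-crossing matching (with score f(s - t) for a pair matching time t to time s), the element t_n is matched. -/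
/-!
If `t_n` were unmatched, take the matched pair `(t_i, s_j)` with the largest `i`. All other pairs
lie strictly below and to the left of it, so replacing it by `(t_n, s_j)` keeps the matching
non-crossing, and since `s_j - t_n < s_j - t_i` and `f` is strictly decreasing this strictly increases
the weight. If nothing is matched at all, the single pair `(t_n, s_m)` already has positive weight.
-/

open Finset

section NoncrossingMatching

variable {α β : Type*}

def IsNoncrossingMatching [LT α] [LT β] (M : Finset (α × β)) : Prop :=
  (∀ p ∈ M, ∀ q ∈ M, (p.1 = q.1 ∨ p.2 = q.2) → p = q) ∧
    ∀ p ∈ M, ∀ q ∈ M, p.1 < q.1 → p.2 < q.2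

theorem isNoncrossingMatching_singleton [Preorder α] [LT β] (p : α × β) :
    IsNoncrossingMatching {p} := by
  refine ⟨fun a ha b hb _ => ?_, fun a ha b hb h => ?_⟩
  · rw [mem_singleton.1 ha, mem_singleton.1 hb]
  · rw [mem_singleton.1 ha, mem_singleton.1 hb] at h
    exact absurd h (lt_irrefl _)

theorem IsNoncrossingMatching.mono [LT α] [LT β] {M N : Finset (α × β)}
    (hM : IsNoncrossingMatching M) (hNM : N ⊆ M) : IsNoncrossingMatching N :=
  ⟨fun p hp q hq => hM.1 p (hNM hp) q (hNM hq), fun p hp q hq => hM.2 p (hNM hp) q (hNM hq)⟩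

theorem IsNoncrossingMatching.insert_of_forall_lt [DecidableEq α] [DecidableEq β]
    [Preorder α] [Preorder β]
    {M : Finset (α × β)} (hM : IsNoncrossingMatching M) {a : α × β}
    (ha : ∀ q ∈ M, q.1 < a.1 ∧ q.2 < a.2) : IsNoncrossingMatching (insert a M) := by
  refine ⟨fun p hp q hq hpq => ?_, fun p hp q hq hpq => ?_⟩
  · rcases mem_insert.1 hp with rfl | hpM <;> rcases mem_insert.1 hq with rfl | hqM
    · rfl
    · obtain ⟨h1, h2⟩ := ha q hqM
      exact (hpq.elim h1.ne' h2.ne').elim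
    · obtain ⟨h1, h2⟩ := ha p hpM
      exact (hpq.elim h1.ne h2.ne).elim
    · exact hM.1 p hpM q hqM hpq
  · rcases mem_insert.1 hp with rfl | hpM <;> rcases mem_insert.1 hq with rfl | hqM
    · exact absurd hpq (lt_irrefl _)
    · exact absurd hpq (ha q hqM).1.asymm
    · exact (ha p hpM).2
    · exact hM.2 p hpM q hqM hpq

theorem IsNoncrossingMatching.lt_of_mem_erase [DecidableEq α] [DecidableEq β]
    [PartialOrder α] [LT β] {M : Finset (α × β)}
    (hM : IsNoncrossingMatching M) {i : α} {j : β} (hij : (i, j) ∈ M)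
    (hmax : ∀ q ∈ M, q.1 ≤ i) {q : α × β} (hq : q ∈ M.erase (i, j)) : q.1 < i ∧ q.2 < j := by
  obtain ⟨hne, hqM⟩ := mem_erase.1 hq
  have hlt : q.1 < i := (hmax q hqM).lt_of_ne fun h => hne (hM.1 q hqM _ hij (Or.inl h))
  exact ⟨hlt, hM.2 q hqM _ hij hlt⟩

theorem IsNoncrossingMatching.replace_last [DecidableEq α] [DecidableEq β]
    [PartialOrder α] [Preorder β] {M : Finset (α × β)}
    (hM : IsNoncrossingMatching M) {i a : α} {j : β} (hij : (i, j) ∈ M)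
    (hmax : ∀ q ∈ M, q.1 ≤ i) (hia : i < a) :
    IsNoncrossingMatching (insert (a, j) (M.erase (i, j))) :=
  (hM.mono (erase_subset _ _)).insert_of_forall_lt (a := (a, j)) fun _ hq =>
    have h := hM.lt_of_mem_erase hij hmax hq
    ⟨h.1.trans hia, h.2⟩

end NoncrossingMatching

theorem last_matched_in_max_weight_matching_general {n m : ℕ} (f : ℝ → ℝ)
    (hf : StrictAnti f) (t : Fin (n + 1) → ℝ) (s : Fin (m + 1) → ℝ)
    (ht : StrictMono t)
    (hpos : 0 < f (s (Fin.last m) - t 0))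
    (M : Finset (Fin (n + 1) × Fin (m + 1)))
    (hinj : ∀ p ∈ M, ∀ q ∈ M, (p.1 = q.1 ∨ p.2 = q.2) → p = q)
    (hnc : ∀ p ∈ M, ∀ q ∈ M, p.1 < q.1 → p.2 < q.2)
    (hmax : ∀ M' : Finset (Fin (n + 1) × Fin (m + 1)),
      (∀ p ∈ M', ∀ q ∈ M', (p.1 = q.1 ∨ p.2 = q.2) → p = q) →
      (∀ p ∈ M', ∀ q ∈ M', p.1 < q.1 → p.2 < q.2) →
      (∑ p ∈ M', f (s p.2 - t p.1)) ≤ ∑ p ∈ M, f (s p.2 - t p.1)) :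
    ∃ j, (Fin.last n, j) ∈ M := by
  have hM : IsNoncrossingMatching M := ⟨hinj, hnc⟩
  by_contra! hunmatched
  rcases M.eq_empty_or_nonempty with rfl | hne
  · have hsingle := isNoncrossingMatching_singleton (Fin.last n, Fin.last m)
    have hle := hmax _ hsingle.1 hsingle.2
    have hfirst : f (s (Fin.last m) - t 0) ≤ f (s (Fin.last m) - t (Fin.last n)) :=
      hf.antitone (by linarith [ht.monotone (Fin.zero_le (Fin.last n))])
    simp only [sum_singleton, sum_empty] at hle
    linarith
  · obtain ⟨⟨i, j⟩, hij, himax⟩ := M.exists_max_image Prod.fst hne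
    have hi : i < Fin.last n := (Fin.le_last i).lt_of_ne fun h => hunmatched j (h ▸ hij)
    have hM' := hM.replace_last hij himax hi
    have hnew : (Fin.last n, j) ∉ M.erase (i, j) := fun h => hunmatched j (mem_of_mem_erase h)
    have hgain : f (s j - t i) < f (s j - t (Fin.last n)) := hf (by linarith [ht hi])
    have hle := hmax _ hM'.1 hM'.2
    rw [sum_insert hnew, ← sum_erase_add M _ hij] at hle
    linarith

/-- for a strictly decreasing weight function `f` with
`f (s_m - t_1) > 0` and all of `L2` after all of `L1`, every maximum-weight
non-crossing matching matches the last element `t_n` of `L1`. -/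
theorem last_matched_in_max_weight_matching {n m : ℕ} (f : ℝ → ℝ)
    (hf : StrictAnti f) (t : Fin (n + 1) → ℝ) (s : Fin (m + 1) → ℝ)
    (ht : StrictMono t) (hs : StrictMono s)
    (hsep : ∀ j, t (Fin.last n) < s j)
    (hpos : 0 < f (s (Fin.last m) - t 0))
    (M : Finset (Fin (n + 1) × Fin (m + 1)))
    (hinj : ∀ p ∈ M, ∀ q ∈ M, (p.1 = q.1 ∨ p.2 = q.2) → p = q)
    (hnc : ∀ p ∈ M, ∀ q ∈ M, p.1 < q.1 → p.2 < q.2)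
    (hmax : ∀ M' : Finset (Fin (n + 1) × Fin (m + 1)),
      (∀ p ∈ M', ∀ q ∈ M', (p.1 = q.1 ∨ p.2 = q.2) → p = q) →
      (∀ p ∈ M', ∀ q ∈ M', p.1 < q.1 → p.2 < q.2) →
      (∑ p ∈ M', f (s p.2 - t p.1)) ≤ ∑ p ∈ M, f (s p.2 - t p.1)) :
    ∃ j, (Fin.last n, j) ∈ M :=
  last_matched_in_max_weight_matching_general f hf t s ht hpos M hinj hnc hmax
end

section
/- The Jaccard distance d(S, S') = 1 - |S ∩ S'| / |S ∪ S'| (with d(∅, ∅) = 0) satisfies the triangle inequality on finite sets: for all finite sets S, S', S'', d(S, S'') ≤ d(S, S') + d(S', S''). -/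
/-!
Write the distance as `#(A ∆ B) / #(A ∪ B)` and put `U = A ∪ B ∪ C`. The elements of `B` outside
`A ∪ C` lie in `A ∆ B` but not in `A ∆ C`, so adding their number `m` to numerator and denominator
of `d(A, C)` gives `d(A, C) ≤ (#(A ∆ C) + m) / #U ≤ (#(A ∆ B) + #(B ∆ C)) / #U`, and the last
quotient is at most `d(A, B) + d(B, C)` because `#U` dominates both `#(A ∪ B)` and `#(B ∪ C)`.
-/

/-- Jaccard distance between finite sets, with the convention `d(∅,∅) = 0`. -/
noncomputable def jaccardDist {α : Type*} [DecidableEq α] (S S' : Finset α) : ℝ :=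
  if S ∪ S' = ∅ then 0 else 1 - ((S ∩ S').card : ℝ) / ((S ∪ S').card : ℝ)

open Finset
open scoped symmDiff

lemma div_le_add_div_add {K : Type*} [Field K] [LinearOrder K] [IsStrictOrderedRing K]
    {x y m : K} (hx : 0 ≤ x) (hxy : x ≤ y) (hm : 0 ≤ m) : x / y ≤ (x + m) / (y + m) := by
  rcases (hx.trans hxy).eq_or_lt with rfl | hy
  · rw [div_zero, zero_add]
    exact div_nonneg (add_nonneg hx hm) hm
  · rw [div_le_div_iff₀ hy (by linarith)]
    nlinarith [mul_nonneg hm (sub_nonneg.2 hxy)]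

section

variable {α : Type*} [DecidableEq α]

lemma jaccardDist_eq_card_symmDiff_div (A B : Finset α) :
    jaccardDist A B = #(A ∆ B) / #(A ∪ B) := by
  unfold jaccardDist
  split_ifs with h
  · obtain ⟨rfl, rfl⟩ := union_eq_empty.mp h
    simp
  · have hpos : (0 : ℝ) < #(A ∪ B) := by exact_mod_cast card_pos.mpr (nonempty_iff_ne_empty.mpr h)
    have hcard : #(A ∆ B) + #(A ∩ B) = #(A ∪ B) :=
      (card_union_of_disjoint (disjoint_symmDiff_inf A B)).symm.trans
        (congrArg card (symmDiff_sup_inf A B))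
    rw [← hcard] at hpos ⊢
    push_cast at hpos ⊢
    field_simp
    ring

lemma card_symmDiff_div_le_jaccardDist {A B V : Finset α} (h : A ∪ B ⊆ V) :
    (#(A ∆ B) : ℝ) / #V ≤ jaccardDist A B := by
  rw [jaccardDist_eq_card_symmDiff_div]
  rcases (A ∪ B).eq_empty_or_nonempty with he | hne
  · obtain ⟨rfl, rfl⟩ := union_eq_empty.mp he
    simp
  · exact div_le_div_of_nonneg_left (Nat.cast_nonneg _) (by exact_mod_cast hne.card_pos)
      (by exact_mod_cast card_le_card h)

lemma card_symmDiff_add_card_sdiff_le (A B C : Finset α) :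
    #(A ∆ C) + #(B \ (A ∪ C)) ≤ #(A ∆ B) + #(B ∆ C) := by
  have hdisj : Disjoint (A ∆ C) (B \ (A ∪ C)) := disjoint_sdiff.mono_left symmDiff_subset_union
  have hsub : A ∆ C ∪ B \ (A ∪ C) ⊆ A ∆ B ∪ B ∆ C := by
    intro x
    simp only [mem_union, mem_symmDiff, mem_sdiff]
    tauto
  rw [← card_union_of_disjoint hdisj]
  exact (card_le_card hsub).trans (card_union_le _ _)

end

/-- the Jaccard distance satisfies the triangle inequality. -/
theorem jaccardDist_triangle {α : Type*} [DecidableEq α] (S S' S'' : Finset α) :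
    jaccardDist S S'' ≤ jaccardDist S S' + jaccardDist S' S'' := by
  set U := S ∪ S' ∪ S''
  have hU : #U = #(S ∪ S'') + #(S' \ (S ∪ S'')) := by
    rw [← card_union_of_disjoint disjoint_sdiff, union_sdiff_self_eq_union, union_right_comm]
  calc jaccardDist S S''
      = #(S ∆ S'') / #(S ∪ S'') := jaccardDist_eq_card_symmDiff_div S S''
    _ ≤ (#(S ∆ S'') + #(S' \ (S ∪ S''))) / (#(S ∪ S'') + #(S' \ (S ∪ S''))) :=
        div_le_add_div_add (Nat.cast_nonneg _)
          (by exact_mod_cast card_le_card symmDiff_subset_union) (Nat.cast_nonneg _)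
    _ ≤ (#(S ∆ S') + #(S' ∆ S'')) / #U := by
        rw [hU, Nat.cast_add]
        gcongr ?_ / _
        exact_mod_cast card_symmDiff_add_card_sdiff_le S S' S''
    _ = #(S ∆ S') / #U + #(S' ∆ S'') / #U := add_div _ _ _
    _ ≤ jaccardDist S S' + jaccardDist S' S'' :=
        add_le_add (card_symmDiff_div_le_jaccardDist subset_union_left)
          (card_symmDiff_div_le_jaccardDist
            (union_subset (subset_union_right.trans subset_union_left) subset_union_right))
end

section
/- Let τ_min ≤ τ_max and let L1, L2 be sorted lists of reals. Define the maximum matching size function μ(L1, L2) as the maximum cardinality of a valid matching (pairs (t,s) with s - t ∈ [τ_min, τ_max], using each list element at most once). If (t*, s*) is the componentwise-earliest valid pair, then μ(L1, L2) = 1 + μ(L1', L2'), where L1' and L2' are the suffixes of L1 and L2 strictly after t* and s* respectively. -/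
open Classical in
/-- Maximum cardinality of a valid matching between two lists of reals:
pairs `(i,j)` of indices with `l2[j] - l1[i] ∈ [τmin, τmax]`, each index used
at most once. -/
noncomputable def maxMatch (τmin τmax : ℝ) (l1 l2 : List ℝ) : ℕ :=
  ((Finset.range l1.length ×ˢ Finset.range l2.length).powerset.filter
    (fun M => (∀ p ∈ M, ∀ q ∈ M, (p.1 = q.1 ∨ p.2 = q.2) → p = q) ∧
      ∀ p ∈ M, τmin ≤ l2.getD p.2 0 - l1.getD p.1 0 ∧
        l2.getD p.2 0 - l1.getD p.1 0 ≤ τmax)).sup Finset.card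

/-!
Prepending the earliest pair `(i, j)` to an optimal matching of the suffixes gives `≥`.
Conversely, every pair of a matching lies weakly after `(i, j)`, and at most two of them,
`(i, j')` and `(i', j)`, touch row `i` or column `j`. If there are two, sortedness makes
`(i', j')` valid, and exchanging the two for it costs one pair. What is left lies strictly
after `(i, j)`, i.e. is a shifted matching of the suffixes.
-/

theorem List.Pairwise.getD_le_getD {α : Type*} [Preorder α] {l : List α}
    (hl : l.Pairwise (· ≤ ·)) (d : α) {a b : ℕ} (hab : a ≤ b) (hb : b < l.length) :
    l.getD a d ≤ l.getD b d := by
  rw [List.getD_eq_getElem _ _ (hab.trans_lt hb), List.getD_eq_getElem _ _ hb]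
  exact hl.sortedLE.getElem_le_getElem_of_le hab

theorem List.getD_drop {α : Type*} (l : List α) (d : α) (a n : ℕ) :
    (l.drop a).getD n d = l.getD (a + n) d := by
  simp only [List.getD_eq_getElem?_getD, List.getElem?_drop]

namespace MaxMatch

variable {τmin τmax : ℝ} {l1 l2 : List ℝ}

def IsValidPair (τmin τmax : ℝ) (l1 l2 : List ℝ) (p : ℕ × ℕ) : Prop :=
  p.1 < l1.length ∧ p.2 < l2.length ∧ l2.getD p.2 0 - l1.getD p.1 0 ∈ Set.Icc τmin τmax

structure IsMatching (τmin τmax : ℝ) (l1 l2 : List ℝ) (M : Finset (ℕ × ℕ)) : Prop where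
  valid : ∀ p ∈ M, IsValidPair τmin τmax l1 l2 p
  injOn_fst : Set.InjOn Prod.fst (M : Set (ℕ × ℕ))
  injOn_snd : Set.InjOn Prod.snd (M : Set (ℕ × ℕ))

theorem isValidPair_drop_iff {a b : ℕ} {p : ℕ × ℕ} :
    IsValidPair τmin τmax (l1.drop a) (l2.drop b) p ↔
      IsValidPair τmin τmax l1 l2 (Prod.map (a + ·) (b + ·) p) := by
  simp only [IsValidPair, List.length_drop, List.getD_drop, Prod.map_fst, Prod.map_snd]
  constructor <;> rintro ⟨h1, h2, h⟩ <;> exact ⟨by omega, by omega, h⟩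

/-- The lag of `(i', j')` is squeezed between the lags of `(i', j)` and `(i, j')`. -/
theorem isValidPair_of_crossing (h1 : l1.Pairwise (· ≤ ·)) (h2 : l2.Pairwise (· ≤ ·))
    {i i' j j' : ℕ} (hi : i ≤ i') (hj : j ≤ j')
    (hp : IsValidPair τmin τmax l1 l2 (i, j')) (hq : IsValidPair τmin τmax l1 l2 (i', j)) :
    IsValidPair τmin τmax l1 l2 (i', j') := by
  obtain ⟨-, hj', hp_min, hp_max⟩ := hp
  obtain ⟨hi', -, hq_min, hq_max⟩ := hq
  have ht := h1.getD_le_getD 0 hi hi'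
  have hs := h2.getD_le_getD 0 hj hj'
  exact ⟨hi', hj', by dsimp only at *; linarith, by dsimp only at *; linarith⟩

namespace IsMatching

variable {M N : Finset (ℕ × ℕ)}

theorem mono (hM : IsMatching τmin τmax l1 l2 M) (hNM : N ⊆ M) :
    IsMatching τmin τmax l1 l2 N :=
  ⟨fun p hp => hM.valid p (hNM hp), hM.injOn_fst.mono (Finset.coe_subset.2 hNM),
    hM.injOn_snd.mono (Finset.coe_subset.2 hNM)⟩

theorem insert_of_forall_ne (hM : IsMatching τmin τmax l1 l2 M) {r : ℕ × ℕ}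
    (hr : IsValidPair τmin τmax l1 l2 r) (hfresh : ∀ x ∈ M, x.1 ≠ r.1 ∧ x.2 ≠ r.2) :
    IsMatching τmin τmax l1 l2 (insert r M) := by
  have hrM : r ∉ (M : Set (ℕ × ℕ)) := fun h => (hfresh r h).1 rfl
  refine ⟨?_, ?_, ?_⟩
  · exact (Finset.forall_mem_insert _ _ _).2 ⟨hr, hM.valid⟩
  · rw [Finset.coe_insert, Set.injOn_insert hrM]
    exact ⟨hM.injOn_fst, fun ⟨x, hx, h⟩ => (hfresh x hx).1 h⟩
  · rw [Finset.coe_insert, Set.injOn_insert hrM]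
    exact ⟨hM.injOn_snd, fun ⟨x, hx, h⟩ => (hfresh x hx).2 h⟩

end IsMatching

theorem isMatching_iff {M : Finset (ℕ × ℕ)} :
    IsMatching τmin τmax l1 l2 M ↔
      M ⊆ Finset.range l1.length ×ˢ Finset.range l2.length ∧
        (∀ p ∈ M, ∀ q ∈ M, (p.1 = q.1 ∨ p.2 = q.2) → p = q) ∧
        ∀ p ∈ M, τmin ≤ l2.getD p.2 0 - l1.getD p.1 0 ∧ l2.getD p.2 0 - l1.getD p.1 0 ≤ τmax := by
  constructor
  · intro hM
    refine ⟨fun p hp => ?_, ?_, fun p hp => (hM.valid p hp).2.2⟩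
    · obtain ⟨h1, h2, -⟩ := hM.valid p hp
      exact Finset.mem_product.2 ⟨Finset.mem_range.2 h1, Finset.mem_range.2 h2⟩
    · rintro p hp q hq (h | h)
      exacts [hM.injOn_fst hp hq h, hM.injOn_snd hp hq h]
  · rintro ⟨hsub, hinj, hwin⟩
    refine ⟨fun p hp => ?_, fun p hp q hq h => hinj p hp q hq (.inl h),
      fun p hp q hq h => hinj p hp q hq (.inr h)⟩
    obtain ⟨h1, h2⟩ := Finset.mem_product.1 (hsub hp)
    exact ⟨Finset.mem_range.1 h1, Finset.mem_range.1 h2, hwin p hp⟩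

theorem IsMatching.card_le_maxMatch {M : Finset (ℕ × ℕ)} (hM : IsMatching τmin τmax l1 l2 M) :
    M.card ≤ maxMatch τmin τmax l1 l2 := by
  obtain ⟨hsub, hM⟩ := isMatching_iff.1 hM
  exact Finset.le_sup (Finset.mem_filter.2 ⟨Finset.mem_powerset.2 hsub, hM⟩)

theorem exists_isMatching_card_eq_maxMatch (τmin τmax : ℝ) (l1 l2 : List ℝ) :
    ∃ M, IsMatching τmin τmax l1 l2 M ∧ M.card = maxMatch τmin τmax l1 l2 := by
  unfold maxMatch
  refine (Finset.exists_mem_eq_sup _ ?_ Finset.card).imp fun M ⟨hM, hsup⟩ => ⟨?_, hsup.symm⟩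
  · exact ⟨∅, by simp⟩
  · rw [Finset.mem_filter, Finset.mem_powerset] at hM
    exact isMatching_iff.2 hM

theorem isMatching_image_add_iff {a b : ℕ} {M : Finset (ℕ × ℕ)} :
    IsMatching τmin τmax l1 l2 (M.image (Prod.map (a + ·) (b + ·))) ↔
      IsMatching τmin τmax (l1.drop a) (l2.drop b) M := by
  have hshift : Set.InjOn (Prod.map (a + ·) (b + ·)) (M : Set (ℕ × ℕ)) :=
    ((add_right_injective a).prodMap (add_right_injective b)).injOn
  have hfst : Set.InjOn Prod.fst (Prod.map (a + ·) (b + ·) '' (M : Set (ℕ × ℕ))) ↔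
      Set.InjOn Prod.fst (M : Set (ℕ × ℕ)) := by
    rw [← hshift.comp_iff]
    exact ⟨fun h => Set.InjOn.of_comp (g := (a + ·)) h, (add_right_injective a).comp_injOn⟩
  have hsnd : Set.InjOn Prod.snd (Prod.map (a + ·) (b + ·) '' (M : Set (ℕ × ℕ))) ↔
      Set.InjOn Prod.snd (M : Set (ℕ × ℕ)) := by
    rw [← hshift.comp_iff]
    exact ⟨fun h => Set.InjOn.of_comp (g := (b + ·)) h, (add_right_injective b).comp_injOn⟩
  constructor
  · rintro ⟨hvalid, hinj1, hinj2⟩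
    rw [Finset.coe_image] at hinj1 hinj2
    exact ⟨fun p hp => isValidPair_drop_iff.2 (hvalid _ (Finset.mem_image_of_mem _ hp)),
      hfst.1 hinj1, hsnd.1 hinj2⟩
  · rintro ⟨hvalid, hinj1, hinj2⟩
    refine ⟨Finset.forall_mem_image.2 fun p hp => isValidPair_drop_iff.1 (hvalid p hp), ?_, ?_⟩
    · rw [Finset.coe_image]; exact hfst.2 hinj1
    · rw [Finset.coe_image]; exact hsnd.2 hinj2

theorem IsMatching.card_le_maxMatch_drop {M : Finset (ℕ × ℕ)} {a b : ℕ}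
    (hM : IsMatching τmin τmax l1 l2 M) (hge : ∀ p ∈ M, a ≤ p.1 ∧ b ≤ p.2) :
    M.card ≤ maxMatch τmin τmax (l1.drop a) (l2.drop b) := by
  set M' := M.image fun p => (p.1 - a, p.2 - b)
  have hM' : M'.image (Prod.map (a + ·) (b + ·)) = M := by
    rw [Finset.image_image]
    refine (Finset.image_congr fun p hp => ?_).trans M.image_id
    obtain ⟨ha, hb⟩ := hge p hp
    ext <;> simp <;> omega
  rw [← hM'] at hM ⊢
  exact Finset.card_image_le.trans (isMatching_image_add_iff.1 hM).card_le_maxMatch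

theorem succ_maxMatch_drop_le {i j : ℕ} (hij : IsValidPair τmin τmax l1 l2 (i, j)) :
    1 + maxMatch τmin τmax (l1.drop (i + 1)) (l2.drop (j + 1)) ≤ maxMatch τmin τmax l1 l2 := by
  obtain ⟨M, hM, hcard⟩ :=
    exists_isMatching_card_eq_maxMatch τmin τmax (l1.drop (i + 1)) (l2.drop (j + 1))
  have hfresh : ∀ x ∈ M.image (Prod.map (i + 1 + ·) (j + 1 + ·)), x.1 ≠ i ∧ x.2 ≠ j := by
    simp only [Finset.forall_mem_image, Prod.map_fst, Prod.map_snd]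
    omega
  calc 1 + maxMatch τmin τmax (l1.drop (i + 1)) (l2.drop (j + 1))
      = (insert (i, j) (M.image (Prod.map (i + 1 + ·) (j + 1 + ·)))).card := by
        rw [Finset.card_insert_of_notMem fun h => (hfresh _ h).1 rfl,
          Finset.card_image_of_injective _
            ((add_right_injective _).prodMap (add_right_injective _)), hcard, add_comm]
    _ ≤ maxMatch τmin τmax l1 l2 :=
        ((isMatching_image_add_iff.2 hM).insert_of_forall_ne hij hfresh).card_le_maxMatch

section Exchange

variable {M : Finset (ℕ × ℕ)} {i j : ℕ}

/-- Without crossing pairs, at most one pair touches row `i` or column `j`. -/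
theorem IsMatching.card_le_card_filter_add_one (hM : IsMatching τmin τmax l1 l2 M)
    (hge : ∀ p ∈ M, i ≤ p.1 ∧ j ≤ p.2)
    (hcross : ∀ i' j', (i, j') ∈ M → (i', j) ∈ M → (i, j') = (i', j)) :
    M.card ≤ (M.filter fun p => i < p.1 ∧ j < p.2).card + 1 := by
  have hborder : (M.filter fun p => ¬(i < p.1 ∧ j < p.2)).card ≤ 1 := by
    refine Finset.card_le_one.2 fun ⟨p1, p2⟩ hp ⟨q1, q2⟩ hq => ?_
    rw [Finset.mem_filter] at hp hq
    have hp' : p1 = i ∨ p2 = j := by have := hge _ hp.1; dsimp only at *; omega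
    have hq' : q1 = i ∨ q2 = j := by have := hge _ hq.1; dsimp only at *; omega
    replace hp := hp.1
    replace hq := hq.1
    rcases hp' with rfl | rfl <;> rcases hq' with hq' | hq'
    · exact hM.injOn_fst hp hq hq'.symm
    · subst hq'; exact hcross _ _ hp hq
    · subst hq'; exact (hcross _ _ hq hp).symm
    · exact hM.injOn_snd hp hq hq'.symm
  have := Finset.card_filter_add_card_filter_not (s := M) fun p => i < p.1 ∧ j < p.2
  omega

/-- Replacing the crossing pairs `(i, j')` and `(i', j)` by `(i', j')` loses only one pair. -/
theorem IsMatching.exists_of_crossing (h1 : l1.Pairwise (· ≤ ·)) (h2 : l2.Pairwise (· ≤ ·))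
    (hM : IsMatching τmin τmax l1 l2 M) (hge : ∀ p ∈ M, i ≤ p.1 ∧ j ≤ p.2) {i' j' : ℕ}
    (hp : (i, j') ∈ M) (hq : (i', j) ∈ M) (hne : (i, j') ≠ (i', j)) :
    ∃ N, IsMatching τmin τmax l1 l2 N ∧ (∀ p ∈ N, i < p.1 ∧ j < p.2) ∧ M.card ≤ N.card + 1 := by
  have hi : i < i' := lt_of_le_of_ne (hge _ hq).1 fun h => hne (hM.injOn_fst hp hq h)
  have hj : j < j' := lt_of_le_of_ne (hge _ hp).2 fun h => hne (hM.injOn_snd hp hq h.symm)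
  set S := M.filter fun p => i < p.1 ∧ j < p.2
  have hfresh : ∀ x ∈ S, x.1 ≠ i' ∧ x.2 ≠ j' := by
    intro x hx
    obtain ⟨hx, hxi, hxj⟩ := Finset.mem_filter.1 hx
    refine ⟨fun h => ?_, fun h => ?_⟩
    · rw [hM.injOn_fst hx hq h] at hxj; exact lt_irrefl _ hxj
    · rw [hM.injOn_snd hx hp h] at hxi; exact lt_irrefl _ hxi
  have hsub : M ⊆ insert (i, j') (insert (i', j) S) := by
    intro x hx
    rw [Finset.mem_insert, Finset.mem_insert, Finset.mem_filter]
    by_cases hx1 : x.1 = i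
    · exact .inl (hM.injOn_fst hx hp hx1)
    by_cases hx2 : x.2 = j
    · exact .inr (.inl (hM.injOn_snd hx hq hx2))
    have := hge x hx
    exact .inr (.inr ⟨hx, by omega, by omega⟩)
  have hvalid := isValidPair_of_crossing h1 h2 hi.le hj.le (hM.valid _ hp) (hM.valid _ hq)
  refine ⟨insert (i', j') S,
    (hM.mono (Finset.filter_subset _ _)).insert_of_forall_ne hvalid hfresh, ?_, ?_⟩
  · exact (Finset.forall_mem_insert _ _ _).2 ⟨⟨hi, hj⟩, fun p hp => (Finset.mem_filter.1 hp).2⟩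
  · rw [Finset.card_insert_of_notMem fun h => (hfresh _ h).1 rfl]
    have := Finset.card_le_card hsub
    have := Finset.card_insert_le (i, j') (insert (i', j) S)
    have := Finset.card_insert_le (i', j) S
    omega

theorem IsMatching.exists_card_le_succ (h1 : l1.Pairwise (· ≤ ·)) (h2 : l2.Pairwise (· ≤ ·))
    (hM : IsMatching τmin τmax l1 l2 M) (hge : ∀ p ∈ M, i ≤ p.1 ∧ j ≤ p.2) :
    ∃ N, IsMatching τmin τmax l1 l2 N ∧ (∀ p ∈ N, i < p.1 ∧ j < p.2) ∧ M.card ≤ N.card + 1 := by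
  by_cases hcross : ∃ i' j', (i, j') ∈ M ∧ (i', j) ∈ M ∧ (i, j') ≠ (i', j)
  · obtain ⟨i', j', hp, hq, hne⟩ := hcross
    exact hM.exists_of_crossing h1 h2 hge hp hq hne
  · push Not at hcross
    exact ⟨_, hM.mono (Finset.filter_subset _ _), fun p hp => (Finset.mem_filter.1 hp).2,
      hM.card_le_card_filter_add_one hge hcross⟩

end Exchange

theorem maxMatch_le_succ_maxMatch_drop (h1 : l1.Pairwise (· ≤ ·)) (h2 : l2.Pairwise (· ≤ ·))
    {i j : ℕ} (hearliest : ∀ p, IsValidPair τmin τmax l1 l2 p → i ≤ p.1 ∧ j ≤ p.2) :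
    maxMatch τmin τmax l1 l2 ≤ 1 + maxMatch τmin τmax (l1.drop (i + 1)) (l2.drop (j + 1)) := by
  obtain ⟨M, hM, hcard⟩ := exists_isMatching_card_eq_maxMatch τmin τmax l1 l2
  obtain ⟨N, hN, hgt, hMN⟩ :=
    hM.exists_card_le_succ h1 h2 fun p hp => hearliest p (hM.valid p hp)
  have := hN.card_le_maxMatch_drop (a := i + 1) (b := j + 1) hgt
  omega

end MaxMatch

theorem maxMatch_earliest_recursion_general (τmin τmax : ℝ)
    (l1 l2 : List ℝ) (h1 : l1.Pairwise (· ≤ ·)) (h2 : l2.Pairwise (· ≤ ·))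
    (i j : ℕ) (hi : i < l1.length) (hj : j < l2.length)
    (hvalid : τmin ≤ l2.getD j 0 - l1.getD i 0 ∧ l2.getD j 0 - l1.getD i 0 ≤ τmax)
    (hearliest : ∀ i' j', i' < l1.length → j' < l2.length →
      (τmin ≤ l2.getD j' 0 - l1.getD i' 0 ∧ l2.getD j' 0 - l1.getD i' 0 ≤ τmax) →
      i ≤ i' ∧ j ≤ j') :
    maxMatch τmin τmax l1 l2 =
      1 + maxMatch τmin τmax (l1.drop (i + 1)) (l2.drop (j + 1)) :=
  le_antisymm
    (MaxMatch.maxMatch_le_succ_maxMatch_drop h1 h2 fun p ⟨hp1, hp2, hp⟩ =>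
      hearliest p.1 p.2 hp1 hp2 hp)
    (MaxMatch.succ_maxMatch_drop_le ⟨hi, hj, hvalid⟩)

/-- if `(i*, j*)` is the componentwise-earliest valid pair, then
`μ(L1, L2) = 1 + μ(L1', L2')` where `L1', L2'` are the suffixes strictly after
positions `i*` and `j*`. -/
theorem maxMatch_earliest_recursion (τmin τmax : ℝ) (hτ : τmin ≤ τmax)
    (l1 l2 : List ℝ) (h1 : l1.Pairwise (· ≤ ·)) (h2 : l2.Pairwise (· ≤ ·))
    (i j : ℕ) (hi : i < l1.length) (hj : j < l2.length)
    (hvalid : τmin ≤ l2.getD j 0 - l1.getD i 0 ∧ l2.getD j 0 - l1.getD i 0 ≤ τmax)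
    (hearliest : ∀ i' j', i' < l1.length → j' < l2.length →
      (τmin ≤ l2.getD j' 0 - l1.getD i' 0 ∧ l2.getD j' 0 - l1.getD i' 0 ≤ τmax) →
      i ≤ i' ∧ j ≤ j') :
    maxMatch τmin τmax l1 l2 =
      1 + maxMatch τmin τmax (l1.drop (i + 1)) (l2.drop (j + 1)) :=
  maxMatch_earliest_recursion_general τmin τmax l1 l2 h1 h2 i j hi hj hvalid hearliest
end

section
/- Let τ_min ≤ τ_max and δ ≥ 0 and let (t_1,...,t_n), (s_1,...,s_n) be two tuples of reals that each satisfy a common collection of constraints, where each constraint is either a chain constraint τ_min ≤ x_b - x_a ≤ τ_max for some ordered index pair (a,b), or a sibling constraint |x_a - x_b| ≤ δ for some index pair {a,b}. Then the componentwise minimum tuple (min(t_1,s_1), ..., min(t_n,s_n)) also satisfies every constraint in the collection. -/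
/-! Both constraint shapes bound a difference `x_b - x_a` of two coordinates, and a difference of
componentwise minima `min a b - min c d` lies between `min (a - c) (b - d)` and
`max (a - c) (b - d)`; so any interval containing the corresponding differences of both tuples
also contains that of their minimum. -/

open Set

section LinearOrderedAddCommGroup

variable {α : Type*} [AddCommGroup α] [LinearOrder α] [IsOrderedAddMonoid α]

theorem min_sub_min_le_max (a b c d : α) : min a b - min c d ≤ max (a - c) (b - d) := by
  grind

theorem min_le_min_sub_min (a b c d : α) : min (a - c) (b - d) ≤ min a b - min c d := by
  simpa only [← min_neg_neg, neg_sub] using neg_le_neg (min_sub_min_le_max c d a b)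

theorem min_sub_min_mem_Icc {a b c d x y : α} (hac : a - c ∈ Icc x y) (hbd : b - d ∈ Icc x y) :
    min a b - min c d ∈ Icc x y :=
  ⟨(le_min hac.1 hbd.1).trans (min_le_min_sub_min a b c d),
    (min_sub_min_le_max a b c d).trans (max_le hac.2 hbd.2)⟩

end LinearOrderedAddCommGroup

theorem min_satisfies_constraints_general (τmin τmax δ : ℝ)
    {n : ℕ} (chains siblings : Set (Fin n × Fin n)) (t s : Fin n → ℝ)
    (htc : ∀ c ∈ chains, τmin ≤ t c.2 - t c.1 ∧ t c.2 - t c.1 ≤ τmax)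
    (hsc : ∀ c ∈ chains, τmin ≤ s c.2 - s c.1 ∧ s c.2 - s c.1 ≤ τmax)
    (hts : ∀ c ∈ siblings, |t c.1 - t c.2| ≤ δ)
    (hss : ∀ c ∈ siblings, |s c.1 - s c.2| ≤ δ) :
    (∀ c ∈ chains,
      τmin ≤ min (t c.2) (s c.2) - min (t c.1) (s c.1) ∧
      min (t c.2) (s c.2) - min (t c.1) (s c.1) ≤ τmax) ∧
    (∀ c ∈ siblings, |min (t c.1) (s c.1) - min (t c.2) (s c.2)| ≤ δ) :=
  ⟨fun c hc => min_sub_min_mem_Icc (htc c hc) (hsc c hc),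
    fun c hc => (abs_min_sub_min_le_max _ _ _ _).trans (max_le (hts c hc) (hss c hc))⟩

/-- if two tuples each satisfy a common collection of chain
constraints (ordered pairs) and sibling constraints (pairs), then their
componentwise minimum satisfies every constraint in the collection. -/
theorem min_satisfies_constraints (τmin τmax δ : ℝ) (hτ : τmin ≤ τmax) (hδ : 0 ≤ δ)
    {n : ℕ} (chains siblings : Set (Fin n × Fin n)) (t s : Fin n → ℝ)
    (htc : ∀ c ∈ chains, τmin ≤ t c.2 - t c.1 ∧ t c.2 - t c.1 ≤ τmax)
    (hsc : ∀ c ∈ chains, τmin ≤ s c.2 - s c.1 ∧ s c.2 - s c.1 ≤ τmax)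
    (hts : ∀ c ∈ siblings, |t c.1 - t c.2| ≤ δ)
    (hss : ∀ c ∈ siblings, |s c.1 - s c.2| ≤ δ) :
    (∀ c ∈ chains,
      τmin ≤ min (t c.2) (s c.2) - min (t c.1) (s c.1) ∧
      min (t c.2) (s c.2) - min (t c.1) (s c.1) ≤ τmax) ∧
    (∀ c ∈ siblings, |min (t c.1) (s c.1) - min (t c.2) (s c.2)| ≤ δ) :=
  min_satisfies_constraints_general τmin τmax δ chains siblings t s htc hsc hts hss
end

section
/- Let L1, L2 be sorted lists of reals, τ_min ≤ τ_max, and suppose M = {(a_1,b_1), ..., (a_k,b_k)} with a_1 < ... < a_k and b_1 < ... < b_k is the non-crossing valid matching produced by the greedy earliest-match algorithm. Then for any non-crossing valid matching M' = {(a'_1,b'_1),...,(a'_j,b'_j)} (with indices increasing) we have j ≤ k, and for each i ≤ j, a_i ≤ a'_i and b_i ≤ b'_i. -/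
/-! Greedy stays ahead. Consider the run on the suffixes starting at position `i` of `L1` and
`j` of `L2`. If `L2[j] - L1[i] < τmin`, then, `L1` being sorted, `L2[j]` is too close to every
later `L1[i']`, so no valid pair uses `j`; symmetrically, if `τmax < L2[j] - L1[i]` no valid pair
uses `i`. So skipping loses nothing, and when `(i, j)` is valid it lies componentwise below the
first pair of any non-crossing matching inside the suffixes, whose remaining pairs lie beyond
`(i + 1, j + 1)`. Induction along the run of the algorithm then shows that the greedy matching is
at least as long as any other and earlier pair by pair. -/

/-- The greedy earliest-match algorithm, returning the list of matched index
pairs (indices are absolute positions in the original lists, tracked by the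
offsets `i`, `j`). -/
noncomputable def greedyMatch (τmin τmax : ℝ) : List ℝ → List ℝ → ℕ → ℕ → List (ℕ × ℕ)
  | [], _, _, _ => []
  | _ :: _, [], _, _ => []
  | t :: ts, s :: ss, i, j =>
      if s - t < τmin then greedyMatch τmin τmax (t :: ts) ss i (j + 1)
      else if τmax < s - t then greedyMatch τmin τmax ts (s :: ss) (i + 1) j
      else (i, j) :: greedyMatch τmin τmax ts ss (i + 1) (j + 1)
  termination_by l1 l2 => l1.length + l2.length
  decreasing_by all_goals simp +arith +decide

namespace List

variable {α : Type*}

theorem Pairwise.getD_le_getD_s15 [Preorder α] {L : List α} (hL : L.Pairwise (· ≤ ·)) (d : α)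
    {a b : ℕ} (hab : a ≤ b) (hb : b < L.length) : L.getD a d ≤ L.getD b d := by
  rw [getD_eq_getElem _ _ (hab.trans_lt hb), getD_eq_getElem _ _ hb]
  exact hL.rel_get_of_le (a := ⟨a, hab.trans_lt hb⟩) (b := ⟨b, hb⟩) hab

theorem drop_eq_cons {L ts : List α} {i : ℕ} {t : α} (d : α) (h : L.drop i = t :: ts) :
    i < L.length ∧ L.getD i d = t ∧ L.drop (i + 1) = ts := by
  have hi : i < L.length := by
    by_contra hc
    simp [drop_eq_nil_of_le (not_lt.mp hc)] at h
  rw [drop_eq_getElem_cons hi, cons.injEq] at h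
  exact ⟨hi, by rw [getD_eq_getElem _ _ hi, h.1], h.2⟩

end List

def IsValidPair (τmin τmax : ℝ) (L1 L2 : List ℝ) (p : ℕ × ℕ) : Prop :=
  p.1 < L1.length ∧ p.2 < L2.length ∧
    τmin ≤ L2.getD p.2 0 - L1.getD p.1 0 ∧ L2.getD p.2 0 - L1.getD p.1 0 ≤ τmax

def NonCrossing (M : List (ℕ × ℕ)) : Prop :=
  M.Pairwise fun p q => p.1 < q.1 ∧ p.2 < q.2

def Dominates (M M' : List (ℕ × ℕ)) : Prop :=
  M'.length ≤ M.length ∧ ∀ k < M'.length, M.getD k (0, 0) ≤ M'.getD k (0, 0)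

theorem Dominates.nil (M : List (ℕ × ℕ)) : Dominates M [] := by
  simp [Dominates]

theorem Dominates.cons {p q : ℕ × ℕ} {M M' : List (ℕ × ℕ)} (hpq : p ≤ q)
    (h : Dominates M M') : Dominates (p :: M) (q :: M') := by
  refine ⟨Nat.succ_le_succ h.1, fun k hk => ?_⟩
  cases k with
  | zero => exact hpq
  | succ k => exact h.2 k (Nat.lt_of_succ_lt_succ hk)

section Greedy

variable {τmin τmax : ℝ} {L1 L2 : List ℝ}

theorem le_of_mem_greedyMatch {l1 l2 : List ℝ} {i j : ℕ} {p : ℕ × ℕ}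
    (hp : p ∈ greedyMatch τmin τmax l1 l2 i j) : (i, j) ≤ p := by
  induction l1, l2, i, j using greedyMatch.induct τmin τmax with
  | case1 | case2 => simp [greedyMatch] at hp
  | case3 t ts s ss i j hlt ih =>
    rw [greedyMatch, if_pos hlt] at hp
    exact (Prod.mk_le_mk.2 ⟨le_rfl, j.le_succ⟩).trans (ih hp)
  | case4 t ts s ss i j hlt hgt ih =>
    rw [greedyMatch, if_neg hlt, if_pos hgt] at hp
    exact (Prod.mk_le_mk.2 ⟨i.le_succ, le_rfl⟩).trans (ih hp)
  | case5 t ts s ss i j hlt hgt ih =>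
    rw [greedyMatch, if_neg hlt, if_neg hgt, List.mem_cons] at hp
    rcases hp with rfl | hp
    · exact le_rfl
    · exact (Prod.mk_le_mk.2 ⟨i.le_succ, j.le_succ⟩).trans (ih hp)

theorem nonCrossing_greedyMatch (l1 l2 : List ℝ) (i j : ℕ) :
    NonCrossing (greedyMatch τmin τmax l1 l2 i j) := by
  induction l1, l2, i, j using greedyMatch.induct τmin τmax with
  | case1 | case2 => simp [greedyMatch, NonCrossing]
  | case3 t ts s ss i j hlt ih => rwa [greedyMatch, if_pos hlt]
  | case4 t ts s ss i j hlt hgt ih => rwa [greedyMatch, if_neg hlt, if_pos hgt]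
  | case5 t ts s ss i j hlt hgt ih =>
    rw [greedyMatch, if_neg hlt, if_neg hgt, NonCrossing, List.pairwise_cons]
    exact ⟨fun q hq => le_of_mem_greedyMatch hq, ih⟩

theorem isValidPair_of_mem_greedyMatch {i j : ℕ} {p : ℕ × ℕ}
    (hp : p ∈ greedyMatch τmin τmax (L1.drop i) (L2.drop j) i j) :
    IsValidPair τmin τmax L1 L2 p := by
  generalize hl1 : L1.drop i = l1, hl2 : L2.drop j = l2 at hp
  induction l1, l2, i, j using greedyMatch.induct τmin τmax with
  | case1 | case2 => simp [greedyMatch] at hp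
  | case3 t ts s ss i j hlt ih =>
    rw [greedyMatch, if_pos hlt] at hp
    exact ih hl1 (List.drop_eq_cons 0 hl2).2.2 hp
  | case4 t ts s ss i j hlt hgt ih =>
    rw [greedyMatch, if_neg hlt, if_pos hgt] at hp
    exact ih (List.drop_eq_cons 0 hl1).2.2 hl2 hp
  | case5 t ts s ss i j hlt hgt ih =>
    obtain ⟨hi, ht, hts⟩ := List.drop_eq_cons 0 hl1
    obtain ⟨hj, hs, hss⟩ := List.drop_eq_cons 0 hl2
    rw [greedyMatch, if_neg hlt, if_neg hgt, List.mem_cons] at hp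
    rcases hp with rfl | hp
    · exact ⟨hi, hj, by rw [ht, hs]; linarith, by rw [ht, hs]; linarith⟩
    · exact ih hts hss hp

theorem IsValidPair.snd_ne_of_sub_lt (h1 : L1.Pairwise (· ≤ ·)) {i j : ℕ} {p : ℕ × ℕ}
    (hp : IsValidPair τmin τmax L1 L2 p) (hip : i ≤ p.1)
    (hlt : L2.getD j 0 - L1.getD i 0 < τmin) : p.2 ≠ j := by
  rintro rfl
  linarith [h1.getD_le_getD_s15 0 hip hp.1, hp.2.2.1]

theorem IsValidPair.fst_ne_of_lt_sub (h2 : L2.Pairwise (· ≤ ·)) {i j : ℕ} {p : ℕ × ℕ}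
    (hp : IsValidPair τmin τmax L1 L2 p) (hjp : j ≤ p.2)
    (hgt : τmax < L2.getD j 0 - L1.getD i 0) : p.1 ≠ i := by
  rintro rfl
  linarith [h2.getD_le_getD_s15 0 hjp hp.2.1, hp.2.2.2]

theorem greedyMatch_dominates (h1 : L1.Pairwise (· ≤ ·)) (h2 : L2.Pairwise (· ≤ ·))
    {i j : ℕ} {M : List (ℕ × ℕ)} (hM : NonCrossing M)
    (hval : ∀ p ∈ M, (i, j) ≤ p ∧ IsValidPair τmin τmax L1 L2 p) :
    Dominates (greedyMatch τmin τmax (L1.drop i) (L2.drop j) i j) M := by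
  generalize hl1 : L1.drop i = l1, hl2 : L2.drop j = l2
  induction l1, l2, i, j using greedyMatch.induct τmin τmax generalizing M with
  | case1 l2 i j =>
    suffices M = [] from this ▸ Dominates.nil _
    refine List.eq_nil_iff_forall_not_mem.mpr fun p hp => ?_
    obtain ⟨⟨hip, -⟩, hp1, -⟩ := hval p hp
    have := List.drop_eq_nil_iff.mp hl1
    omega
  | case2 t ts i j =>
    suffices M = [] from this ▸ Dominates.nil _
    refine List.eq_nil_iff_forall_not_mem.mpr fun p hp => ?_
    obtain ⟨⟨-, hjp⟩, -, hp2, -⟩ := hval p hp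
    have := List.drop_eq_nil_iff.mp hl2
    omega
  | case3 t ts s ss i j hlt ih =>
    obtain ⟨-, ht, -⟩ := List.drop_eq_cons 0 hl1
    obtain ⟨-, hs, hss⟩ := List.drop_eq_cons 0 hl2
    rw [greedyMatch, if_pos hlt]
    refine ih hM (fun p hp => ?_) hl1 hss
    obtain ⟨⟨hip, hjp⟩, hv⟩ := hval p hp
    have := hv.snd_ne_of_sub_lt h1 hip (by rwa [ht, hs])
    exact ⟨⟨hip, by omega⟩, hv⟩
  | case4 t ts s ss i j hlt hgt ih =>
    obtain ⟨-, ht, hts⟩ := List.drop_eq_cons 0 hl1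
    obtain ⟨-, hs, -⟩ := List.drop_eq_cons 0 hl2
    rw [greedyMatch, if_neg hlt, if_pos hgt]
    refine ih hM (fun p hp => ?_) hts hl2
    obtain ⟨⟨hip, hjp⟩, hv⟩ := hval p hp
    have := hv.fst_ne_of_lt_sub h2 hjp (by rwa [ht, hs])
    exact ⟨⟨by omega, hjp⟩, hv⟩
  | case5 t ts s ss i j hlt hgt ih =>
    obtain ⟨-, -, hts⟩ := List.drop_eq_cons 0 hl1
    obtain ⟨-, -, hss⟩ := List.drop_eq_cons 0 hl2
    rw [greedyMatch, if_neg hlt, if_neg hgt]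
    cases M with
    | nil => exact Dominates.nil _
    | cons q rest =>
      rw [NonCrossing, List.pairwise_cons] at hM
      obtain ⟨⟨hiq, hjq⟩, -⟩ := hval q List.mem_cons_self
      refine (ih hM.2 (fun p hp => ?_) hts hss).cons ⟨hiq, hjq⟩
      obtain ⟨hqp1, hqp2⟩ := hM.1 p hp
      exact ⟨⟨by omega, by omega⟩, (hval p (List.mem_cons_of_mem q hp)).2⟩

end Greedy

theorem greedy_earliest_and_maximum_general (τmin τmax : ℝ)
    (l1 l2 : List ℝ) (h1 : l1.Pairwise (· ≤ ·)) (h2 : l2.Pairwise (· ≤ ·)) :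
    (greedyMatch τmin τmax l1 l2 0 0).Pairwise (fun p q => p.1 < q.1 ∧ p.2 < q.2) ∧
    (∀ p ∈ greedyMatch τmin τmax l1 l2 0 0, p.1 < l1.length ∧ p.2 < l2.length ∧
      τmin ≤ l2.getD p.2 0 - l1.getD p.1 0 ∧ l2.getD p.2 0 - l1.getD p.1 0 ≤ τmax) ∧
    ∀ M' : List (ℕ × ℕ),
      M'.Pairwise (fun p q => p.1 < q.1 ∧ p.2 < q.2) →
      (∀ p ∈ M', p.1 < l1.length ∧ p.2 < l2.length ∧
        τmin ≤ l2.getD p.2 0 - l1.getD p.1 0 ∧ l2.getD p.2 0 - l1.getD p.1 0 ≤ τmax) →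
      M'.length ≤ (greedyMatch τmin τmax l1 l2 0 0).length ∧
      ∀ i < M'.length,
        ((greedyMatch τmin τmax l1 l2 0 0).getD i (0, 0)).1 ≤ (M'.getD i (0, 0)).1 ∧
        ((greedyMatch τmin τmax l1 l2 0 0).getD i (0, 0)).2 ≤ (M'.getD i (0, 0)).2 := by
  refine ⟨nonCrossing_greedyMatch l1 l2 0 0, fun p hp => ?_, fun M' hM' hval => ?_⟩
  · rw [← List.drop_zero (l := l1), ← List.drop_zero (l := l2)] at hp
    exact isValidPair_of_mem_greedyMatch hp
  · have := greedyMatch_dominates (i := 0) (j := 0) h1 h2 hM' fun p hp => ⟨bot_le, hval p hp⟩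
    rwa [List.drop_zero, List.drop_zero] at this

/-- the greedy matching `M` is a non-crossing valid matching, and
for every non-crossing valid matching `M'` (pairs listed with strictly
increasing coordinates) we have `|M'| ≤ |M|` and the `i`-th pair of `M` is
componentwise at most the `i`-th pair of `M'`. -/
theorem greedy_earliest_and_maximum (τmin τmax : ℝ) (hτ : τmin ≤ τmax)
    (l1 l2 : List ℝ) (h1 : l1.Pairwise (· ≤ ·)) (h2 : l2.Pairwise (· ≤ ·)) :
    (greedyMatch τmin τmax l1 l2 0 0).Pairwise (fun p q => p.1 < q.1 ∧ p.2 < q.2) ∧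
    (∀ p ∈ greedyMatch τmin τmax l1 l2 0 0, p.1 < l1.length ∧ p.2 < l2.length ∧
      τmin ≤ l2.getD p.2 0 - l1.getD p.1 0 ∧ l2.getD p.2 0 - l1.getD p.1 0 ≤ τmax) ∧
    ∀ M' : List (ℕ × ℕ),
      M'.Pairwise (fun p q => p.1 < q.1 ∧ p.2 < q.2) →
      (∀ p ∈ M', p.1 < l1.length ∧ p.2 < l2.length ∧
        τmin ≤ l2.getD p.2 0 - l1.getD p.1 0 ∧ l2.getD p.2 0 - l1.getD p.1 0 ≤ τmax) →
      M'.length ≤ (greedyMatch τmin τmax l1 l2 0 0).length ∧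
      ∀ i < M'.length,
        ((greedyMatch τmin τmax l1 l2 0 0).getD i (0, 0)).1 ≤ (M'.getD i (0, 0)).1 ∧
        ((greedyMatch τmin τmax l1 l2 0 0).getD i (0, 0)).2 ≤ (M'.getD i (0, 0)).2 :=
  greedy_earliest_and_maximum_general τmin τmax l1 l2 h1 h2
end
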